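/- arXiv:2206.14540 — 3 statements merged into one kernel-verified Lean document; each statement's English description precedes it below -/
import Mathlib

section
/- Let n ≥ 1 and k ∈ ℝ. Then for every u ∈ C_c^∞(ℝ^{n+1}_+), (∫_{ℝ^{n+1}_+} t^{(n+1)k/n} |u(y,t)|^{(n+1)/n} dy dt)^{n/(n+1)} ≤ 2^{1/n} ∫_{ℝ^{n+1}_+} t^{k} |∇u(y,t)| dy dt. -/
open MeasureTheory Set Function
open scoped ENNReal

noncomputable section

/-- The open upper half space `ℝ^{n+1}_+`. -/
def upperHalfSpace (n : ℕ) : Set (EuclideanSpace ℝ (Fin (n+1))) :=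
  {x | 0 < x (Fin.last n)}

lemma WGN.deriv_zero_of_nmem {g : ℝ → ℝ} {s : ℝ} (h : s ∉ tsupport g) : deriv g s = 0 := by
  by_contra h'
  exact h (support_deriv_subset h')

lemma WGN.oneDim {g : ℝ → ℝ} (hg : ContDiff ℝ 1 g) (h2g : HasCompactSupport g)
    (hsupp : tsupport g ⊆ Ioi (0:ℝ)) (k : ℝ) {t : ℝ} (ht : 0 < t) :
    ENNReal.ofReal (t ^ k * |g t|) ≤
      ∫⁻ s in Ioi (0:ℝ), ENNReal.ofReal (s ^ k * |deriv g s|) := by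
  have hconts : Continuous (deriv g) := hg.continuous_deriv le_rfl
  have hint : Integrable (deriv g) := hconts.integrable_of_hasCompactSupport h2g.deriv
  have hmeas : Measurable fun s : ℝ => ENNReal.ofReal (s ^ k * |deriv g s|) :=
    ((measurable_id.pow_const k).mul hconts.measurable.abs).ennreal_ofReal
  have habs : ∀ c : ℝ, 0 ≤ c → ∀ A : Set ℝ,
      ENNReal.ofReal (c * ∫ s in A, |deriv g s|) = ∫⁻ s in A, ENNReal.ofReal (c * |deriv g s|) := by
    intro c hc A
    rw [ENNReal.ofReal_mul hc,
      ofReal_integral_eq_lintegral_ofReal hint.abs.integrableOn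
        (ae_of_all _ fun s => abs_nonneg _),
      ← lintegral_const_mul' _ _ ENNReal.ofReal_ne_top]
    simp_rw [← ENNReal.ofReal_mul hc]
  rcases le_or_gt 0 k with hk | hk
  · have h1 : |g t| ≤ ∫ s in Ioi t, |deriv g s| := by
      calc |g t| = |∫ s in Ioi t, deriv g s| := by
            rw [h2g.integral_Ioi_deriv_eq hg t, abs_neg]
        _ ≤ ∫ s in Ioi t, |deriv g s| := by
            simpa using norm_integral_le_integral_norm (μ := volume.restrict (Ioi t)) (deriv g)
    calc ENNReal.ofReal (t ^ k * |g t|)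
        ≤ ENNReal.ofReal (t ^ k * ∫ s in Ioi t, |deriv g s|) := by
          apply ENNReal.ofReal_le_ofReal
          exact mul_le_mul_of_nonneg_left h1 (Real.rpow_nonneg ht.le k)
      _ = ∫⁻ s in Ioi t, ENNReal.ofReal (t ^ k * |deriv g s|) :=
          habs _ (Real.rpow_nonneg ht.le k) _
      _ ≤ ∫⁻ s in Ioi t, ENNReal.ofReal (s ^ k * |deriv g s|) := by
          refine setLIntegral_mono hmeas fun s hs => ?_
          exact ENNReal.ofReal_le_ofReal
            (mul_le_mul_of_nonneg_right (Real.rpow_le_rpow ht.le (le_of_lt hs) hk) (abs_nonneg _))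
      _ ≤ ∫⁻ s in Ioi 0, ENNReal.ofReal (s ^ k * |deriv g s|) :=
          lintegral_mono_set (Ioi_subset_Ioi ht.le)
  · have h1 : |g t| ≤ ∫ s in Iic t, |deriv g s| := by
      calc |g t| = |∫ s in Iic t, deriv g s| := by
            rw [h2g.integral_Iic_deriv_eq hg t]
        _ ≤ ∫ s in Iic t, |deriv g s| := by
            simpa using norm_integral_le_integral_norm (μ := volume.restrict (Iic t)) (deriv g)
    calc ENNReal.ofReal (t ^ k * |g t|)
        ≤ ENNReal.ofReal (t ^ k * ∫ s in Iic t, |deriv g s|) := by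
          apply ENNReal.ofReal_le_ofReal
          exact mul_le_mul_of_nonneg_left h1 (Real.rpow_nonneg ht.le k)
      _ = ∫⁻ s in Iic t, ENNReal.ofReal (t ^ k * |deriv g s|) :=
          habs _ (Real.rpow_nonneg ht.le k) _
      _ ≤ ∫⁻ s in Iic t, (Ioi (0:ℝ)).indicator
            (fun s => ENNReal.ofReal (s ^ k * |deriv g s|)) s := by
          refine setLIntegral_mono (hmeas.indicator measurableSet_Ioi) fun s hs => ?_
          rcases le_or_gt s 0 with hs0 | hs0
          · have : deriv g s = 0 := WGN.deriv_zero_of_nmem fun hmem => by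
              have := hsupp hmem; simp at this; linarith
            simp [this]
          · rw [indicator_of_mem (mem_Ioi.mpr hs0)]
            exact ENNReal.ofReal_le_ofReal
              (mul_le_mul_of_nonneg_right
                (Real.rpow_le_rpow_of_nonpos hs0 hs hk.le) (abs_nonneg _))
      _ ≤ ∫⁻ s, (Ioi (0:ℝ)).indicator
            (fun s => ENNReal.ofReal (s ^ k * |deriv g s|)) s :=
          setLIntegral_le_lintegral _ _
      _ = ∫⁻ s in Ioi 0, ENNReal.ofReal (s ^ k * |deriv g s|) :=
          lintegral_indicator measurableSet_Ioi _


lemma WGN.norm_symm_single {m : ℕ} (i : Fin m) :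
    ‖(EuclideanSpace.equiv (Fin m) ℝ).symm (Pi.single i 1)‖ = 1 := by
  rw [EuclideanSpace.norm_eq]
  simp only [EuclideanSpace.equiv, PiLp.continuousLinearEquiv_symm_apply,
    PiLp.toLp_apply, Pi.single_apply]
  rw [Finset.sum_eq_single i] <;> simp +contextual

lemma WGN.deriv_comp_update
    {m : ℕ} {u : EuclideanSpace ℝ (Fin m) → ℝ} (hu : ContDiff ℝ 1 u)
    (x : Fin m → ℝ) (i : Fin m) (s : ℝ) :
    |deriv (fun s => u ((EuclideanSpace.equiv (Fin m) ℝ).symm (Function.update x i s))) s| ≤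
      ‖fderiv ℝ u ((EuclideanSpace.equiv (Fin m) ℝ).symm (Function.update x i s))‖ := by
  set e := EuclideanSpace.equiv (Fin m) ℝ with he
  have hinner : HasDerivAt (fun s => e.symm (Function.update x i s))
      (e.symm (Pi.single i 1)) s :=
    e.symm.hasFDerivAt.comp_hasDerivAt s (hasDerivAt_update x i s)
  have houter : HasDerivAt (fun s => u (e.symm (Function.update x i s)))
      (fderiv ℝ u (e.symm (Function.update x i s)) (e.symm (Pi.single i 1))) s :=
    (hu.differentiable one_ne_zero _).hasFDerivAt.comp_hasDerivAt s hinner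
  rw [houter.deriv]
  calc |(fderiv ℝ u (e.symm (Function.update x i s))) (e.symm (Pi.single i 1))|
      ≤ ‖fderiv ℝ u (e.symm (Function.update x i s))‖ * ‖e.symm (Pi.single i 1)‖ :=
        (fderiv ℝ u _).le_opNorm _
    _ = ‖fderiv ℝ u (e.symm (Function.update x i s))‖ := by
        rw [he, WGN.norm_symm_single, mul_one]


lemma WGN.integrable_aux {n : ℕ} {u : EuclideanSpace ℝ (Fin (n+1)) → ℝ}
    (hu_supp : HasCompactSupport u) (hu_sub : tsupport u ⊆ upperHalfSpace n)
    (q : ℝ) {w : EuclideanSpace ℝ (Fin (n+1)) → ℝ} (hw : Continuous w)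
    (hwsupp : support w ⊆ tsupport u) :
    Integrable (fun y : EuclideanSpace ℝ (Fin (n+1)) =>
      if 0 < y (Fin.last n) then (y (Fin.last n)) ^ q * w y else 0) := by
  have hproj : Continuous fun y : EuclideanSpace ℝ (Fin (n+1)) => y (Fin.last n) :=
    (EuclideanSpace.proj (Fin.last n) :
      EuclideanSpace ℝ (Fin (n+1)) →L[ℝ] ℝ).continuous
  have hzero : ∀ y : EuclideanSpace ℝ (Fin (n+1)), y ∉ tsupport u →
      (if 0 < y (Fin.last n) then (y (Fin.last n)) ^ q * w y else 0) = 0 := by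
    intro y hy
    have hw0 : w y = 0 := by
      by_contra h
      exact hy (hwsupp h)
    simp [hw0]
  have hcont : Continuous (fun y : EuclideanSpace ℝ (Fin (n+1)) =>
      if 0 < y (Fin.last n) then (y (Fin.last n)) ^ q * w y else 0) := by
    rw [continuous_iff_continuousAt]
    intro y
    by_cases hy : 0 < y (Fin.last n)
    · have hopen : IsOpen {z : EuclideanSpace ℝ (Fin (n+1)) | 0 < z (Fin.last n)} :=
        isOpen_lt continuous_const hproj
      have hca : ContinuousAt (fun z : EuclideanSpace ℝ (Fin (n+1)) =>
          (z (Fin.last n)) ^ q * w z) y :=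
        (hproj.continuousAt.rpow_const (Or.inl hy.ne')).mul hw.continuousAt
      refine hca.congr ?_
      filter_upwards [hopen.mem_nhds hy] with z hz
      rw [if_pos hz]
    · have hy' : y ∉ tsupport u := by
        intro h
        exact hy (hu_sub h)
      have hev : ∀ᶠ z in nhds y, z ∉ tsupport u :=
        (isClosed_tsupport u).isOpen_compl.mem_nhds hy'
      refine (continuousAt_const (y := (0:ℝ))).congr ?_
      filter_upwards [hev] with z hz
      rw [hzero z hz]
  have hsupp : HasCompactSupport (fun y : EuclideanSpace ℝ (Fin (n+1)) =>
      if 0 < y (Fin.last n) then (y (Fin.last n)) ^ q * w y else 0) :=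
    HasCompactSupport.intro hu_supp hzero
  exact hcont.integrable_of_hasCompactSupport hsupp

/-- For `n ≥ 1`, `k ∈ ℝ` and every `u ∈ C_c^∞(ℝ^{n+1}_+)`,
`(∫ t^{(n+1)k/n} |u|^{(n+1)/n})^{n/(n+1)} ≤ 2^{1/n} ∫ t^k |∇u|`. -/
theorem weighted_gagliardo_nirenberg_l1
    (n : ℕ) (hn : 1 ≤ n) (k : ℝ)
    (u : EuclideanSpace ℝ (Fin (n+1)) → ℝ)
    (hu_smooth : ContDiff ℝ (⊤ : ℕ∞) u)
    (hu_supp : HasCompactSupport u)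
    (hu_sub : tsupport u ⊆ upperHalfSpace n) :
    (∫ x in upperHalfSpace n,
          (x (Fin.last n)) ^ (((n : ℝ) + 1) * k / (n : ℝ)) *
        |u x| ^ (((n : ℝ) + 1) / (n : ℝ))) ^ ((n : ℝ) / ((n : ℝ) + 1)) ≤
      (2 : ℝ) ^ (1 / (n : ℝ)) *
        ∫ x in upperHalfSpace n, (x (Fin.last n)) ^ k * ‖fderiv ℝ u x‖ := by
  classical
  have hn0 : (0:ℝ) < n := by exact_mod_cast hn
  set p : ℝ := ((n:ℝ)+1)/(n:ℝ) with hp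
  have hp0 : 0 < p := by positivity
  set e := EuclideanSpace.equiv (Fin (n+1)) ℝ with he
  have hu1 : ContDiff ℝ 1 u := hu_smooth.of_le (by exact_mod_cast le_top)
  have hU1 : ContDiff ℝ 1 (fun x : Fin (n+1) → ℝ => u (e.symm x)) :=
    hu1.comp e.symm.contDiff
  have hU2 : HasCompactSupport (fun x : Fin (n+1) → ℝ => u (e.symm x)) :=
    hu_supp.comp_homeomorph e.symm.toHomeomorph
  set fP : (Fin (n+1) → ℝ) → ℝ≥0∞ := fun x =>
    if 0 < x (Fin.last n) then
      ENNReal.ofReal ((x (Fin.last n)) ^ k * ‖fderiv ℝ u (e.symm x)‖) else 0 with hfP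
  set FP : (Fin (n+1) → ℝ) → ℝ≥0∞ := fun x =>
    if 0 < x (Fin.last n) then
      ENNReal.ofReal ((x (Fin.last n)) ^ k * |u (e.symm x)|) else 0 with hFP
  have hmeas_set : MeasurableSet {x : Fin (n+1) → ℝ | 0 < x (Fin.last n)} :=
    measurableSet_lt measurable_const (measurable_pi_apply (Fin.last n))
  have hcont_fderiv : Continuous fun x : Fin (n+1) → ℝ => ‖fderiv ℝ u (e.symm x)‖ :=
    ((hu_smooth.continuous_fderiv (by simp)).comp e.symm.continuous).norm
  have hfPmeas : Measurable fP := by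
    refine Measurable.ite hmeas_set ?_ measurable_const
    exact (((measurable_pi_apply (Fin.last n)).pow_const k).mul
      hcont_fderiv.measurable).ennreal_ofReal
  have hFPmeas : Measurable FP := by
    refine Measurable.ite hmeas_set ?_ measurable_const
    exact (((measurable_pi_apply (Fin.last n)).pow_const k).mul
      ((hu_smooth.continuous.comp e.symm.continuous).abs.measurable)).ennreal_ofReal
  have claim1 : ∀ (x : Fin (n+1) → ℝ) (i : Fin (n+1)),
      FP x ≤ ∫⁻ s, fP (Function.update x i s) := by
    intro x i
    by_cases hx : 0 < x (Fin.last n)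
    swap
    · simp only [hFP, if_neg hx]
      exact zero_le
    have hgC : ContDiff ℝ 1 (fun s => u (e.symm (Function.update x i s))) :=
      hU1.comp (by convert contDiff_update 1 x i)
    have hg2 : HasCompactSupport (fun s => u (e.symm (Function.update x i s))) :=
      hU2.comp_isClosedEmbedding (isClosedEmbedding_update x i)
    by_cases hi : i = Fin.last n
    · subst hi
      have hsupp : tsupport (fun s => u (e.symm (Function.update x (Fin.last n) s))) ⊆ Ioi 0 := by
        have hcl : IsClosed {s : ℝ | e.symm (Function.update x (Fin.last n) s) ∈ tsupport u} :=
          (isClosed_tsupport u).preimage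
            (e.symm.continuous.comp (isClosedEmbedding_update x (Fin.last n)).continuous)
        refine (closure_minimal ?_ hcl).trans ?_
        · intro s hs
          exact subset_closure hs
        · intro s hs
          have h2 := hu_sub hs
          have h3 : (0:ℝ) < e.symm (Function.update x (Fin.last n) s) (Fin.last n) := h2
          rwa [show e.symm (Function.update x (Fin.last n) s) (Fin.last n)
              = Function.update x (Fin.last n) s (Fin.last n) from rfl,
            Function.update_self] at h3
      have key := WGN.oneDim hgC hg2 hsupp k hx
      simp only [Function.update_eq_self] at key
      calc FP x = ENNReal.ofReal ((x (Fin.last n)) ^ k * |u (e.symm x)|) := by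
            rw [hFP]; simp only [if_pos hx]
        _ ≤ ∫⁻ s in Ioi (0:ℝ), ENNReal.ofReal
              (s ^ k * |deriv (fun s => u (e.symm (Function.update x (Fin.last n) s))) s|) := key
        _ ≤ ∫⁻ s in Ioi (0:ℝ), ENNReal.ofReal
              (s ^ k * ‖fderiv ℝ u (e.symm (Function.update x (Fin.last n) s))‖) := by
            refine setLIntegral_mono ?_ fun s hs => ?_
            · exact ((measurable_id.pow_const k).mul
                ((hcont_fderiv.comp
                  (isClosedEmbedding_update x (Fin.last n)).continuous).measurable)).ennreal_ofReal
            · exact ENNReal.ofReal_le_ofReal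
                (mul_le_mul_of_nonneg_left (WGN.deriv_comp_update hu1 x (Fin.last n) s)
                  (Real.rpow_nonneg (le_of_lt hs) k))
        _ = ∫⁻ s, fP (Function.update x (Fin.last n) s) := by
            rw [← lintegral_indicator measurableSet_Ioi]
            refine lintegral_congr fun s => ?_
            by_cases h0 : 0 < s
            · rw [indicator_of_mem (mem_Ioi.mpr h0), hfP]
              simp only [Function.update_self, if_pos h0]
            · rw [indicator_of_notMem (fun hh => h0 (mem_Ioi.mp hh)), hfP]
              simp only [Function.update_self, if_neg h0]
    · have hxl : ∀ s : ℝ, Function.update x i s (Fin.last n) = x (Fin.last n) :=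
        fun s => Function.update_of_ne (fun h => hi h.symm) _ _
      calc FP x = ENNReal.ofReal ((x (Fin.last n)) ^ k) * ENNReal.ofReal |u (e.symm x)| := by
            rw [hFP]; simp only [if_pos hx]
            rw [ENNReal.ofReal_mul (Real.rpow_nonneg hx.le k)]
        _ ≤ ENNReal.ofReal ((x (Fin.last n)) ^ k) *
              ∫⁻ s, (‖deriv (fun s => u (e.symm (Function.update x i s))) s‖₊ : ℝ≥0∞) := by
            gcongr
            have h1 : ENNReal.ofReal |u (e.symm x)| =
                (‖(fun s => u (e.symm (Function.update x i s))) (x i)‖₊ : ℝ≥0∞) := by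
              simp only [Function.update_eq_self]
              rw [← enorm_eq_nnnorm, Real.enorm_eq_ofReal_abs]
            rw [h1]
            refine le_trans
              (HasCompactSupport.enorm_le_lintegral_Ici_deriv hgC hg2 (x i)) ?_
            exact lintegral_mono' Measure.restrict_le_self le_rfl
        _ = ∫⁻ s, ENNReal.ofReal ((x (Fin.last n)) ^ k) *
              (‖deriv (fun s => u (e.symm (Function.update x i s))) s‖₊ : ℝ≥0∞) :=
            (lintegral_const_mul' _ _ ENNReal.ofReal_ne_top).symm
        _ ≤ ∫⁻ s, fP (Function.update x i s) := by
            refine lintegral_mono fun s => ?_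
            rw [hfP]
            simp only [hxl s, if_pos hx]
            rw [← enorm_eq_nnnorm, Real.enorm_eq_ofReal_abs, ← ENNReal.ofReal_mul (Real.rpow_nonneg hx.le k)]
            exact ENNReal.ofReal_le_ofReal
              (mul_le_mul_of_nonneg_left (WGN.deriv_comp_update hu1 x i s)
                (Real.rpow_nonneg hx.le k))
  have claim2 : ∫⁻ x, FP x ^ p ≤ (∫⁻ x, fP x) ^ p := by
    have hcard : (Fintype.card (Fin (n+1)) : ℝ) = (n:ℝ) + 1 := by simp
    have hconj : Real.HolderConjugate (Fintype.card (Fin (n+1))) p := by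
      rw [Real.holderConjugate_iff]; constructor
      · rw [hcard]; linarith
      · rw [hcard, hp]; field_simp; ring
    have hq : (0:ℝ) ≤ (1:ℝ)/((Fintype.card (Fin (n+1)) : ℝ) - 1) := by
      rw [show (Fintype.card (Fin (n+1)) : ℝ) - 1 = (n:ℝ) by rw [hcard]; ring]
      exact div_nonneg zero_le_one hn0.le
    have grid := lintegral_prod_lintegral_pow_le
      (fun _ : Fin (n+1) => (volume : Measure ℝ)) hconj hfPmeas
    rw [volume_pi]
    refine le_trans (lintegral_mono fun x => ?_) grid
    have h1 : FP x ^ p = ∏ _i : Fin (n+1),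
        FP x ^ ((1:ℝ)/((Fintype.card (Fin (n+1)) : ℝ) - 1)) := by
      rw [Finset.prod_const, Finset.card_univ, ← ENNReal.rpow_natCast, ← ENNReal.rpow_mul]
      congr 1
      rw [hcard, hp]
      ring
    rw [h1]
    exact Finset.prod_le_prod' fun i _ => ENNReal.rpow_le_rpow (claim1 x i) hq
  have claim3 : (∫⁻ x, FP x ^ p) ^ ((n:ℝ)/((n:ℝ)+1)) ≤ ∫⁻ x, fP x := by
    have h1 := ENNReal.rpow_le_rpow claim2 (show (0:ℝ) ≤ (n:ℝ)/((n:ℝ)+1) by positivity)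
    rwa [← ENNReal.rpow_mul,
      (show p * ((n:ℝ)/((n:ℝ)+1)) = 1 by rw [hp]; field_simp),
      ENNReal.rpow_one] at h1
  -- transfer to Euclidean side
  set S := upperHalfSpace n with hS
  set φ := (MeasurableEquiv.toLp 2 (Fin (n+1) → ℝ)).symm with hφdef
  have hφ : MeasurePreserving φ := EuclideanSpace.volume_preserving_symm_measurableEquiv_toLp (Fin (n+1))
  have hS_meas : MeasurableSet S := by
    have : S = φ ⁻¹' {x : Fin (n+1) → ℝ | 0 < x (Fin.last n)} := rfl
    rw [this]
    exact φ.measurable hmeas_set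
  set IR : ℝ := ∫ x in S, (x (Fin.last n)) ^ k * ‖fderiv ℝ u x‖ with hIRdef
  set IL : ℝ := ∫ x in S,
      (x (Fin.last n)) ^ (((n:ℝ)+1)*k/(n:ℝ)) * |u x| ^ p with hILdef
  have hIRnonneg : 0 ≤ IR := by
    refine setIntegral_nonneg hS_meas fun y hy => ?_
    exact mul_nonneg (Real.rpow_nonneg (le_of_lt hy) _) (norm_nonneg _)
  have hILnonneg : 0 ≤ IL := by
    refine setIntegral_nonneg hS_meas fun y hy => ?_
    exact mul_nonneg (Real.rpow_nonneg (le_of_lt hy) _) (Real.rpow_nonneg (abs_nonneg _) _)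
  have hB : ∫⁻ x, fP x = ENNReal.ofReal IR := by
    have hw : support (fun y : EuclideanSpace ℝ (Fin (n+1)) => ‖fderiv ℝ u y‖) ⊆ tsupport u := by
      intro y hy
      have h1 : fderiv ℝ u y ≠ 0 := by simpa using hy
      exact support_fderiv_subset ℝ (mem_support.mpr h1)
    have hInt : Integrable (fun y : EuclideanSpace ℝ (Fin (n+1)) =>
        if 0 < y (Fin.last n) then (y (Fin.last n)) ^ k * ‖fderiv ℝ u y‖ else 0) :=
      WGN.integrable_aux hu_supp hu_sub k
        ((hu_smooth.continuous_fderiv (by simp)).norm) hw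
    have hIntOn : IntegrableOn
        (fun y : EuclideanSpace ℝ (Fin (n+1)) => (y (Fin.last n)) ^ k * ‖fderiv ℝ u y‖) S :=
      (hInt.integrableOn).congr_fun
        (fun y hy => by dsimp only; rw [if_pos (show (0:ℝ) < y (Fin.last n) from hy)]) hS_meas
    have hae : 0 ≤ᵐ[volume.restrict S]
        fun y : EuclideanSpace ℝ (Fin (n+1)) => (y (Fin.last n)) ^ k * ‖fderiv ℝ u y‖ :=
      (ae_restrict_iff' hS_meas).2 (ae_of_all _ fun y hy =>
        mul_nonneg (Real.rpow_nonneg (le_of_lt (show (0:ℝ) < y (Fin.last n) from hy)) _)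
          (norm_nonneg _))
    rw [← hφ.lintegral_comp hfPmeas]
    have hrw : ∀ y : EuclideanSpace ℝ (Fin (n+1)), fP (φ y) =
        S.indicator (fun y : EuclideanSpace ℝ (Fin (n+1)) =>
          ENNReal.ofReal ((y (Fin.last n)) ^ k * ‖fderiv ℝ u y‖)) y := by
      intro y
      by_cases hy : y ∈ S
      · rw [indicator_of_mem hy]
        simp only [hfP]
        exact if_pos (show (0:ℝ) < (φ y) (Fin.last n) from hy)
      · rw [indicator_of_notMem hy]
        simp only [hfP]
        exact if_neg (show ¬ (0:ℝ) < (φ y) (Fin.last n) from hy)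
    simp_rw [hrw]
    rw [lintegral_indicator hS_meas, hIRdef,
      ofReal_integral_eq_lintegral_ofReal hIntOn hae]
  have hA : ∫⁻ x, FP x ^ p = ENNReal.ofReal IL := by
    have hw : support (fun y : EuclideanSpace ℝ (Fin (n+1)) => |u y| ^ p) ⊆ tsupport u := by
      intro y hy
      have h1 : u y ≠ 0 := by
        intro h0
        apply hy
        simp [h0, Real.zero_rpow hp0.ne']
      exact subset_tsupport u (mem_support.mpr h1)
    have hwc : Continuous fun y : EuclideanSpace ℝ (Fin (n+1)) => |u y| ^ p :=
      (hu_smooth.continuous.abs).rpow_const fun y => Or.inr hp0.le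
    have hInt := WGN.integrable_aux hu_supp hu_sub (((n:ℝ)+1)*k/(n:ℝ)) hwc hw
    have hIntOn : IntegrableOn (fun y : EuclideanSpace ℝ (Fin (n+1)) =>
        (y (Fin.last n)) ^ (((n:ℝ)+1)*k/(n:ℝ)) * |u y| ^ p) S :=
      (hInt.integrableOn).congr_fun
        (fun y hy => by dsimp only; rw [if_pos (show (0:ℝ) < y (Fin.last n) from hy)]) hS_meas
    have hae : 0 ≤ᵐ[volume.restrict S] fun y : EuclideanSpace ℝ (Fin (n+1)) =>
        (y (Fin.last n)) ^ (((n:ℝ)+1)*k/(n:ℝ)) * |u y| ^ p :=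
      (ae_restrict_iff' hS_meas).2 (ae_of_all _ fun y hy =>
        mul_nonneg (Real.rpow_nonneg (le_of_lt (show (0:ℝ) < y (Fin.last n) from hy)) _)
          (Real.rpow_nonneg (abs_nonneg _) _))
    rw [← hφ.lintegral_comp (hFPmeas.pow_const p)]
    have hrw : ∀ y : EuclideanSpace ℝ (Fin (n+1)), FP (φ y) ^ p =
        S.indicator (fun y : EuclideanSpace ℝ (Fin (n+1)) =>
          ENNReal.ofReal ((y (Fin.last n)) ^ (((n:ℝ)+1)*k/(n:ℝ)) * |u y| ^ p)) y := by
      intro y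
      by_cases hy : y ∈ S
      · have h0 : (0:ℝ) < y (Fin.last n) := hy
        have hFPy : FP (φ y) = ENNReal.ofReal (y (Fin.last n) ^ k * |u y|) := by
          simp only [hFP]
          exact if_pos (show (0:ℝ) < (φ y) (Fin.last n) from h0)
        rw [indicator_of_mem hy, hFPy,
          ENNReal.ofReal_rpow_of_nonneg
            (mul_nonneg (Real.rpow_nonneg h0.le k) (abs_nonneg _)) hp0.le]
        congr 1
        rw [Real.mul_rpow (Real.rpow_nonneg h0.le k) (abs_nonneg _), ← Real.rpow_mul h0.le]
        congr 1
        rw [hp]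
        ring
      · have hFPy : FP (φ y) = 0 := by
          simp only [hFP]
          exact if_neg (show ¬ (0:ℝ) < (φ y) (Fin.last n) from hy)
        rw [indicator_of_notMem hy, hFPy, ENNReal.zero_rpow_of_pos hp0]
    simp_rw [hrw]
    rw [lintegral_indicator hS_meas, hILdef,
      ofReal_integral_eq_lintegral_ofReal hIntOn hae]
  have final : IL ^ ((n:ℝ)/((n:ℝ)+1)) ≤ IR := by
    have hAB : (ENNReal.ofReal IL) ^ ((n:ℝ)/((n:ℝ)+1)) ≤ ENNReal.ofReal IR := by
      rw [← hA, ← hB]; exact claim3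
    have h1 : IL ^ ((n:ℝ)/((n:ℝ)+1)) = ((ENNReal.ofReal IL) ^ ((n:ℝ)/((n:ℝ)+1))).toReal := by
      rw [ENNReal.ofReal_rpow_of_nonneg hILnonneg (by positivity),
        ENNReal.toReal_ofReal (Real.rpow_nonneg hILnonneg _)]
    rw [h1, ← ENNReal.toReal_ofReal hIRnonneg]
    exact ENNReal.toReal_mono ENNReal.ofReal_ne_top hAB
  calc IL ^ ((n:ℝ)/((n:ℝ)+1)) ≤ IR := final
    _ ≤ (2:ℝ) ^ (1/(n:ℝ)) * IR := by
      refine le_mul_of_one_le_left hIRnonneg ?_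
      exact Real.one_le_rpow one_le_two (by positivity)
end
end

section
/- Let n = 1 and β ≥ 0. Then μ_{2,β}(ℝ²\{0}) = 0; equivalently, for every c > 0 there exists a nonzero u ∈ C_c^∞(ℝ²\{0}) such that ∫_{ℝ²} |∇u(x)|² dx < c · (∫_{ℝ²} |x|^{-2+((n-1)/(n+1))β} |u(x)|^{2+2β/(n+1)} dx)^{(n+1)/(n+β+1)} with n = 1, i.e. ∫ |∇u|² dx < c · (∫ |x|^{-2} |u|^{2+β} dx)^{2/(2+β)}. -/
open MeasureTheory

noncomputable section

/-- The Hardy–Sobolev quotient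
`J[u] = (∫_Ω |∇u|²) / (∫_Ω δ_Ω^{-2+((n-1)/(n+1))β} |u|^{2+2β/(n+1)})^{(n+1)/(n+β+1)}`,
where `δ_Ω(x) = dist(x, ∂Ω)`. -/
def hsQuotient (n : ℕ) (β : ℝ) (Ω : Set (EuclideanSpace ℝ (Fin (n+1))))
    (u : EuclideanSpace ℝ (Fin (n+1)) → ℝ) : ℝ :=
  (∫ x in Ω, ‖fderiv ℝ u x‖ ^ 2) /
    (∫ x in Ω, (Metric.infDist x (frontier Ω)) ^ (-2 + ((n : ℝ) - 1) / ((n : ℝ) + 1) * β) *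
        |u x| ^ (2 + 2 * β / ((n : ℝ) + 1))) ^ (((n : ℝ) + 1) / ((n : ℝ) + β + 1))

/-- `μ_{n+1,β}(Ω)`: the infimum of the Hardy–Sobolev quotient over nonzero
`u ∈ C_c^∞(Ω)`. -/
def mu (n : ℕ) (β : ℝ) (Ω : Set (EuclideanSpace ℝ (Fin (n+1)))) : ℝ :=
  sInf {r : ℝ | ∃ u : EuclideanSpace ℝ (Fin (n+1)) → ℝ,
    ContDiff ℝ (⊤ : ℕ∞) u ∧ HasCompactSupport u ∧ tsupport u ⊆ Ω ∧ u ≠ 0 ∧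
    r = hsQuotient n β Ω u}

namespace MuAux
open Real Metric Set

abbrev E : Type := EuclideanSpace ℝ (Fin 2)

def g : ContDiffBump (3:ℝ) := ⟨1, 2, one_pos, one_lt_two⟩

lemma g_rIn : g.rIn = 1 := rfl
lemma g_rOut : g.rOut = 2 := rfl

lemma g_zero_of_le {t : ℝ} (ht : t ≤ 1) : g t = 0 := by
  rw [← Function.notMem_support, g.support_eq, g_rOut]
  simp only [mem_ball, Real.dist_eq, not_lt]
  rw [abs_sub_comm, abs_of_nonneg (by linarith)]; linarith

lemma g_zero_of_ge {t : ℝ} (ht : 5 ≤ t) : g t = 0 := by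
  rw [← Function.notMem_support, g.support_eq, g_rOut]
  simp only [mem_ball, Real.dist_eq, not_lt]
  rw [abs_of_nonneg (by linarith)]; linarith

lemma g_one {t : ℝ} (h2 : 2 ≤ t) (h4 : t ≤ 4) : g t = 1 := by
  apply g.one_of_mem_closedBall
  simp only [mem_closedBall, Real.dist_eq, g_rIn, abs_le]
  constructor <;> linarith

def U (L : ℝ) (x : E) : ℝ := g (L⁻¹ * Real.log ‖x‖)

lemma U_zero_of_small {L : ℝ} (hL : 2 ≤ L) {x : E} (hx : ‖x‖ < exp L) : U L x = 0 := by
  have hL0 : 0 < L := by linarith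
  apply g_zero_of_le
  rcases eq_or_ne x 0 with rfl | hx0
  · simp
  · have h1 : 0 < ‖x‖ := norm_pos_iff.2 hx0
    have : Real.log ‖x‖ < L := by
      have := Real.log_lt_log h1 hx
      rwa [Real.log_exp] at this
    rw [inv_mul_le_iff₀ hL0]
    linarith

lemma U_zero_of_big {L : ℝ} (hL : 2 ≤ L) {x : E} (hx : exp (5*L) < ‖x‖) : U L x = 0 := by
  have hL0 : 0 < L := by linarith
  apply g_zero_of_ge
  have h1 : (0:ℝ) < exp (5*L) := Real.exp_pos _
  have : 5*L < Real.log ‖x‖ := by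
    have := Real.log_lt_log h1 hx
    rwa [Real.log_exp] at this
  rw [le_inv_mul_iff₀ hL0]
  linarith

lemma U_support_subset {L : ℝ} (hL : 2 ≤ L) :
    Function.support (U L) ⊆ {x : E | exp L ≤ ‖x‖} := by
  intro x hx
  simp only [Function.mem_support] at hx
  by_contra h
  exact hx (U_zero_of_small hL (not_le.1 h))

lemma U_contDiff {L : ℝ} (hL : 2 ≤ L) : ContDiff ℝ (⊤ : ℕ∞) (U L) := by
  rw [contDiff_iff_contDiffAt]
  intro x
  rcases eq_or_ne x 0 with rfl | hx0
  · have hev : U L =ᶠ[nhds (0:E)] (fun _ => (0:ℝ)) := by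
      filter_upwards [Metric.ball_mem_nhds (0:E) one_pos] with y hy
      apply U_zero_of_small hL
      calc ‖y‖ < 1 := by simpa [dist_eq_norm] using hy
        _ ≤ exp L := by nlinarith [Real.add_one_le_exp L]
    exact (contDiffAt_const (c := (0:ℝ))).congr_of_eventuallyEq hev
  · have h1 : ContDiffAt ℝ (⊤ : ℕ∞) (fun y : E => L⁻¹ * Real.log ‖y‖) x := by
      have hnorm : ContDiffAt ℝ (⊤ : ℕ∞) (fun y : E => ‖y‖) x := contDiffAt_norm ℝ hx0
      have hlog : ContDiffAt ℝ (⊤ : ℕ∞) Real.log ‖x‖ :=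
        (Real.contDiffAt_log).2 (norm_ne_zero_iff.2 hx0)
      exact (hlog.comp x hnorm).const_smul L⁻¹
    exact (g.contDiff.contDiffAt).comp x h1

lemma U_hasCompactSupport {L : ℝ} (hL : 2 ≤ L) : HasCompactSupport (U L) := by
  apply HasCompactSupport.intro (isCompact_closedBall (0:E) (exp (5*L)))
  intro x hx
  apply U_zero_of_big hL
  simpa [dist_eq_norm, not_le] using hx

lemma U_tsupport_subset {L : ℝ} (hL : 2 ≤ L) : tsupport (U L) ⊆ ({(0:E)}ᶜ : Set E) := by
  have hcl : IsClosed {x : E | exp L ≤ ‖x‖} :=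
    isClosed_le continuous_const continuous_norm
  refine (closure_minimal (U_support_subset hL) hcl).trans ?_
  intro x hx
  simp only [mem_setOf_eq] at hx
  simp only [mem_compl_iff, mem_singleton_iff]
  intro h
  rw [h, norm_zero] at hx
  exact absurd hx (not_le.2 (Real.exp_pos L))

lemma U_ne_zero {L : ℝ} (hL : 2 ≤ L) : U L ≠ 0 := by
  have hL0 : 0 < L := by linarith
  intro h
  have hx : U L ((Real.exp (3*L)) • (EuclideanSpace.single (0 : Fin 2) (1:ℝ))) = 1 := by
    have hnorm : ‖(Real.exp (3*L)) • (EuclideanSpace.single (0 : Fin 2) (1:ℝ))‖ = Real.exp (3*L) := by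
      rw [norm_smul, EuclideanSpace.norm_single]
      simp [abs_of_pos (Real.exp_pos _)]
    unfold U
    rw [hnorm, Real.log_exp]
    apply g_one
    · rw [le_inv_mul_iff₀ hL0]; linarith
    · rw [inv_mul_le_iff₀ hL0]; linarith
  rw [h] at hx
  simp at hx

-- derivative bound
lemma U_fderiv_bound {L : ℝ} (hL : 2 ≤ L) {K : ℝ} (hK : ∀ t, |deriv (g : ℝ → ℝ) t| ≤ K)
    {x : E} (hx0 : x ≠ 0) : ‖fderiv ℝ (U L) x‖ ≤ K * (L * ‖x‖)⁻¹ := by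
  have hL0 : 0 < L := by linarith
  have hnx : ‖x‖ ≠ 0 := norm_ne_zero_iff.2 hx0
  have hnxp : 0 < ‖x‖ := norm_pos_iff.2 hx0
  have hdn : DifferentiableAt ℝ (fun y : E => ‖y‖) x :=
    ((contDiffAt_norm ℝ hx0 : ContDiffAt ℝ (⊤:ℕ∞) _ x)).differentiableAt (by simp)
  set N := fderiv ℝ (fun y : E => ‖y‖) x with hN
  have hNd : HasFDerivAt (fun y : E => ‖y‖) N x := hdn.hasFDerivAt
  have hlog : HasDerivAt Real.log ‖x‖⁻¹ ‖x‖ := Real.hasDerivAt_log hnx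
  have hcomp1 : HasFDerivAt (fun y : E => Real.log ‖y‖) (‖x‖⁻¹ • N) x :=
    hlog.comp_hasFDerivAt x hNd
  have hphi : HasFDerivAt (fun y : E => L⁻¹ * Real.log ‖y‖) (L⁻¹ • (‖x‖⁻¹ • N)) x :=
    hcomp1.const_mul L⁻¹
  have hgd : HasDerivAt (g : ℝ → ℝ) (deriv (g : ℝ → ℝ) (L⁻¹ * Real.log ‖x‖))
      (L⁻¹ * Real.log ‖x‖) :=
    (((g.contDiff (n := 1)).differentiable one_ne_zero) _).hasDerivAt
  have hu : HasFDerivAt (U L)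
      ((deriv (g : ℝ → ℝ) (L⁻¹ * Real.log ‖x‖)) • (L⁻¹ • (‖x‖⁻¹ • N))) x :=
    hgd.comp_hasFDerivAt x hphi
  rw [hu.fderiv]
  have hNle : ‖N‖ ≤ 1 := by
    have := norm_fderiv_le_of_lipschitz ℝ (lipschitzWith_one_norm (E := E)) (x₀ := x)
    simpa using this
  rw [norm_smul, norm_smul, norm_smul]
  have h1 : ‖(L:ℝ)⁻¹‖ = L⁻¹ := by rw [Real.norm_eq_abs, abs_of_pos (by positivity)]
  have h2 : ‖(‖x‖:ℝ)⁻¹‖ = ‖x‖⁻¹ := by rw [Real.norm_eq_abs, abs_of_pos (by positivity)]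
  rw [h1, h2, Real.norm_eq_abs, mul_inv]
  have hd := hK (L⁻¹ * Real.log ‖x‖)
  have : ‖x‖⁻¹ * ‖N‖ ≤ ‖x‖⁻¹ := by nlinarith [inv_pos.2 hnxp, norm_nonneg N]
  have hKnn : 0 ≤ K := le_trans (abs_nonneg _) hd
  calc |deriv (g:ℝ→ℝ) (L⁻¹ * Real.log ‖x‖)| * (L⁻¹ * (‖x‖⁻¹ * ‖N‖))
      ≤ K * (L⁻¹ * (‖x‖⁻¹ * ‖N‖)) := by
        apply mul_le_mul_of_nonneg_right hd
        positivity
    _ ≤ K * (L⁻¹ * ‖x‖⁻¹) := by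
        apply mul_le_mul_of_nonneg_left _ hKnn
        apply mul_le_mul_of_nonneg_left this (by positivity)

lemma U_fderiv_zero_small {L : ℝ} (hL : 2 ≤ L) {x : E} (hx : ‖x‖ < exp L) :
    fderiv ℝ (U L) x = 0 := by
  have hev : U L =ᶠ[nhds x] (fun _ => (0:ℝ)) := by
    filter_upwards [IsOpen.mem_nhds (isOpen_lt continuous_norm continuous_const) hx]
      with y hy
    exact U_zero_of_small hL hy
  rw [Filter.EventuallyEq.fderiv_eq hev, fderiv_fun_const]
  rfl

lemma U_fderiv_zero_big {L : ℝ} (hL : 2 ≤ L) {x : E} (hx : exp (5*L) < ‖x‖) :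
    fderiv ℝ (U L) x = 0 := by
  have hev : U L =ᶠ[nhds x] (fun _ => (0:ℝ)) := by
    filter_upwards [IsOpen.mem_nhds (isOpen_lt continuous_const continuous_norm) hx]
      with y hy
    exact U_zero_of_big hL hy
  rw [Filter.EventuallyEq.fderiv_eq hev, fderiv_fun_const]
  rfl

lemma U_one {L : ℝ} (hL : 2 ≤ L) {x : E}
    (h1 : exp (2*L) ≤ ‖x‖) (h2 : ‖x‖ ≤ exp (4*L)) : U L x = 1 := by
  have hL0 : 0 < L := by linarith
  have hxp : 0 < ‖x‖ := lt_of_lt_of_le (Real.exp_pos _) h1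
  have hlog1 : 2*L ≤ Real.log ‖x‖ := by
    rw [← Real.log_exp (2*L)]; exact Real.log_le_log (Real.exp_pos _) h1
  have hlog2 : Real.log ‖x‖ ≤ 4*L := by
    rw [← Real.log_exp (4*L)]; exact Real.log_le_log hxp h2
  apply g_one
  · rw [le_inv_mul_iff₀ hL0]; linarith
  · rw [inv_mul_le_iff₀ hL0]; linarith

lemma ae_ne_zero : ∀ᵐ (x : E), x ≠ 0 := by
  have h : volume ({(0:E)} : Set E) = 0 := measure_singleton _
  rw [ae_iff]
  convert h using 2
  ext x
  simp

lemma gradient_integral_le {L : ℝ} (hL : 2 ≤ L) {K : ℝ}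
    (hK : ∀ t, |deriv (g : ℝ → ℝ) t| ≤ K) (hK1 : 1 ≤ K) :
    (∫ x in ({(0 : E)}ᶜ : Set E), ‖fderiv ℝ (U L) x‖ ^ 2) ≤
      8 * (volume (ball (0:E) 1)).toReal * K^2 / L := by
  have hL0 : 0 < L := by linarith
  have hK0 : 0 < K := by linarith
  set a' := exp L with ha'
  set b' := exp (5*L) with hb'
  have ha'0 : 0 < a' := Real.exp_pos _
  have hb'0 : 0 < b' := Real.exp_pos _
  have hab : a' ≤ b' := Real.exp_le_exp.2 (by linarith)
  set V := (volume (ball (0:E) 1)).toReal with hV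
  set F : ℝ → ℝ := Set.indicator (Icc a' b') (fun r => (K * (L*r)⁻¹)^2) with hF
  -- integrability of F ∘ norm
  have hmT : MeasurableSet ((fun y : E => ‖y‖) ⁻¹' (Icc a' b')) :=
    measurableSet_Icc.preimage measurable_norm
  have hFeq : (fun x : E => F ‖x‖) =
      Set.indicator ((fun y : E => ‖y‖) ⁻¹' (Icc a' b')) (fun x => (K * (L*‖x‖)⁻¹)^2) := by
    funext x
    by_cases hx : ‖x‖ ∈ Icc a' b'
    · rw [hF, Set.indicator_of_mem hx, Set.indicator_of_mem (by exact hx)]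
    · rw [hF, Set.indicator_of_notMem hx, Set.indicator_of_notMem (by exact hx)]
  have hIntF : Integrable (fun x : E => F ‖x‖) := by
    rw [hFeq, integrable_indicator_iff hmT]
    have hTsub : ((fun y : E => ‖y‖) ⁻¹' (Icc a' b')) ⊆ closedBall (0:E) b' := by
      intro x hx
      simp only [mem_preimage, mem_Icc] at hx
      simpa [dist_eq_norm] using hx.2
    have c1 : volume ((fun y : E => ‖y‖) ⁻¹' (Icc a' b')) ≠ ⊤ :=
      ne_of_lt (lt_of_le_of_lt ((measure_mono hTsub : volume _ ≤ volume _))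
        measure_closedBall_lt_top)
    have c2 : AEStronglyMeasurable (fun x : E => (K * (L*‖x‖)⁻¹)^2) volume :=
      ((((measurable_norm.const_mul L).inv.const_mul K).pow_const 2)).aestronglyMeasurable
    have c3 : ∀ᵐ x ∂(volume.restrict ((fun y : E => ‖y‖) ⁻¹' (Icc a' b'))),
        ‖(K * (L*‖x‖)⁻¹)^2‖ ≤ (K * (L*a')⁻¹)^2 := by
      rw [ae_restrict_iff' hmT]
      apply ae_of_all
      intro x hx
      simp only [mem_preimage, mem_Icc] at hx
      rw [Real.norm_eq_abs, abs_of_nonneg (by positivity)]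
      apply pow_le_pow_left₀ (by positivity)
      apply mul_le_mul_of_nonneg_left _ hK0.le
      apply inv_anti₀ (by positivity)
      exact mul_le_mul_of_nonneg_left hx.1 hL0.le
    exact Measure.integrableOn_of_bounded c1 c2 c3
  -- pointwise bound
  have hle : ∀ᵐ (x : E), ‖fderiv ℝ (U L) x‖ ^ 2 ≤ F ‖x‖ := by
    filter_upwards [ae_ne_zero] with x hx0
    by_cases hx : ‖x‖ ∈ Icc a' b'
    · rw [hF, Set.indicator_of_mem hx]
      exact pow_le_pow_left₀ (norm_nonneg _) (U_fderiv_bound hL hK hx0) 2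
    · rw [hF, Set.indicator_of_notMem hx]
      rcases lt_or_ge ‖x‖ a' with h | h
      · rw [U_fderiv_zero_small hL h]; simp
      · rcases lt_or_ge b' ‖x‖ with h2 | h2
        · rw [U_fderiv_zero_big hL h2]; simp
        · exact absurd (mem_Icc.2 ⟨h, h2⟩) hx
  -- reduce to a full-space integral
  rw [MeasureTheory.restrict_compl_singleton]
  have step1 : (∫ x : E, ‖fderiv ℝ (U L) x‖ ^ 2) ≤ ∫ x : E, F ‖x‖ :=
    integral_mono_of_nonneg (ae_of_all _ fun x => by positivity) hIntF hle
  -- polar coordinates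
  have hpolar := MeasureTheory.integral_fun_norm_addHaar (volume : Measure E) F
  have hdim : Module.finrank ℝ E = 2 := finrank_euclideanSpace_fin
  rw [hdim] at hpolar
  -- compute the radial integral
  have hradial : (∫ y in Ioi (0:ℝ), y ^ (2-1) • F y) = K^2 * (L^2)⁻¹ * (4*L) := by
    have h1 : (fun y : ℝ => y ^ (2-1) • F y) =
        Set.indicator (Icc a' b') (fun r => r * (K * (L*r)⁻¹)^2) := by
      funext y
      by_cases hy : y ∈ Icc a' b'
      · rw [hF, Set.indicator_of_mem hy, Set.indicator_of_mem hy]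
        simp [smul_eq_mul]
      · rw [hF, Set.indicator_of_notMem hy, Set.indicator_of_notMem hy, smul_zero]
    rw [h1, setIntegral_indicator measurableSet_Icc,
      show Ioi (0:ℝ) ∩ Icc a' b' = Icc a' b' from
        inter_eq_self_of_subset_right (fun y hy => lt_of_lt_of_le ha'0 hy.1)]
    have h2 : ∫ y in Icc a' b', y * (K * (L*y)⁻¹)^2 =
        ∫ y in Icc a' b', (K^2 * (L^2)⁻¹) * y⁻¹ := by
      apply setIntegral_congr_fun measurableSet_Icc
      intro y hy
      have hy0 : 0 < y := lt_of_lt_of_le ha'0 hy.1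
      field_simp
    rw [h2, integral_const_mul]
    have h3 : ∫ y in Icc a' b', y⁻¹ = Real.log (b'/a') := by
      rw [integral_Icc_eq_integral_Ioc, ← intervalIntegral.integral_of_le hab]
      exact integral_inv (Set.notMem_uIcc_of_lt ha'0 hb'0)
    rw [h3, Real.log_div hb'0.ne' ha'0.ne', ha', hb', Real.log_exp, Real.log_exp]
    ring
  rw [hpolar, hradial] at step1
  calc (∫ x : E, ‖fderiv ℝ (U L) x‖ ^ 2) ≤ 2 • V • (K^2 * (L^2)⁻¹ * (4*L)) := step1
    _ = 8 * V * K^2 / L := by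
      rw [nsmul_eq_mul, smul_eq_mul]
      field_simp
      ring

lemma rpow_neg_two_eq {r : ℝ} (hr : 0 ≤ r) : r ^ (-2 : ℝ) = (r^2)⁻¹ := by
  rw [show ((-2:ℝ)) = ((-2:ℤ):ℝ) by norm_num, Real.rpow_intCast, zpow_neg,
    show ((2:ℤ)) = ((2:ℕ):ℤ) from rfl, zpow_natCast]

lemma rhs_integral_ge {L : ℝ} (hL : 2 ≤ L) {β : ℝ} (hβ : 0 ≤ β) :
    (volume (ball (0:E) 1)).toReal / 9 ≤
      ∫ x in ({(0 : E)}ᶜ : Set E), ‖x‖ ^ (-2 : ℝ) * |U L x| ^ (2 + β) := by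
  have hL0 : 0 < L := by linarith
  set a := exp (2*L) with ha
  have ha0 : 0 < a := Real.exp_pos _
  have ha3 : 3 ≤ a := by nlinarith [Real.add_one_le_exp (2*L)]
  have hasq : a * a = exp (4*L) := by rw [ha, ← Real.exp_add]; ring_nf
  set V := (volume (ball (0:E) 1)).toReal with hV
  set f : E → ℝ := fun x => ‖x‖ ^ (-2 : ℝ) * |U L x| ^ (2 + β) with hf
  have hfnn : ∀ x, 0 ≤ f x := fun x =>
    mul_nonneg (Real.rpow_nonneg (norm_nonneg _) _) (Real.rpow_nonneg (abs_nonneg _) _)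
  -- integrability of f
  have hfmeas : AEStronglyMeasurable f volume := by
    have m1 : Measurable fun x : E => ‖x‖ ^ (-2 : ℝ) := by
      have : (fun x : E => ‖x‖ ^ (-2 : ℝ)) = fun x : E => (‖x‖^2)⁻¹ := by
        funext x; exact rpow_neg_two_eq (norm_nonneg x)
      rw [this]
      exact (measurable_norm.pow_const 2).inv
    have m2 : Continuous fun x : E => |U L x| ^ (2 + β) :=
      (((U_contDiff hL).continuous).abs).rpow_const (fun x => Or.inr (by linarith))
    exact (m1.mul m2.measurable).aestronglyMeasurable
  have hubd : ∀ x : E, |U L x| ≤ 1 := by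
    intro x
    rw [abs_le]
    constructor
    · show -1 ≤ U L x
      unfold U
      have h := g.nonneg' (L⁻¹ * Real.log ‖x‖)
      linarith
    · exact g.le_one
  have hfbd : ∀ x : E, ‖f x‖ ≤ 1 := by
    intro x
    rw [Real.norm_eq_abs, abs_of_nonneg (hfnn x)]
    by_cases hx : U L x = 0
    · simp only [hf, hx, abs_zero]
      rw [Real.zero_rpow (by linarith : (2:ℝ) + β ≠ 0), mul_zero]
      norm_num
    · have hx1 : 1 ≤ ‖x‖ := by
        have := U_support_subset hL (Function.mem_support.2 hx)
        simp only [mem_setOf_eq] at this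
        nlinarith [Real.add_one_le_exp L]
      calc f x ≤ 1 * 1 := by
            apply mul_le_mul _ _ (Real.rpow_nonneg (abs_nonneg _) _) zero_le_one
            · exact Real.rpow_le_one_of_one_le_of_nonpos hx1 (by norm_num)
            · exact Real.rpow_le_one (abs_nonneg _) (hubd x) (by linarith)
        _ = 1 := one_mul 1
  have hfint : Integrable f := by
    have hzero : ∀ x : E, x ∉ closedBall (0:E) (exp (5*L)) → f x = 0 := by
      intro x hx
      have : exp (5*L) < ‖x‖ := by simpa [dist_eq_norm, not_le] using hx
      simp only [hf, U_zero_of_big hL this, abs_zero]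
      rw [Real.zero_rpow (by linarith : (2:ℝ) + β ≠ 0), mul_zero]
    have : f = Set.indicator (closedBall (0:E) (exp (5*L))) f := by
      funext x
      by_cases hx : x ∈ closedBall (0:E) (exp (5*L))
      · rw [Set.indicator_of_mem hx]
      · rw [Set.indicator_of_notMem hx, hzero x hx]
    rw [this, integrable_indicator_iff measurableSet_closedBall]
    exact Measure.integrableOn_of_bounded (M := 1) measure_closedBall_lt_top.ne
      hfmeas (ae_of_all _ fun x => hfbd x)
  -- the ball on which U = 1
  set y₀ : E := (2*a) • (EuclideanSpace.single (0 : Fin 2) (1:ℝ)) with hy₀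
  have hy₀norm : ‖y₀‖ = 2*a := by
    rw [hy₀, norm_smul, EuclideanSpace.norm_single, norm_one, mul_one, Real.norm_eq_abs,
      abs_of_pos (by linarith : (0:ℝ) < 2*a)]
  set B := ball y₀ a with hB
  have hBx : ∀ x ∈ B, a ≤ ‖x‖ ∧ ‖x‖ ≤ 3*a := by
    intro x hx
    rw [hB, mem_ball, dist_eq_norm] at hx
    have h1 := abs_norm_sub_norm_le x y₀
    rw [hy₀norm] at h1
    rw [abs_le] at h1
    constructor <;> nlinarith [h1.1, h1.2]
  have hcb : ∀ x ∈ B, ((3*a)^2)⁻¹ ≤ f x := by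
    intro x hx
    obtain ⟨h1, h2⟩ := hBx x hx
    have hx0 : 0 < ‖x‖ := lt_of_lt_of_le ha0 h1
    have hU1 : U L x = 1 := U_one hL h1 (by nlinarith)
    simp only [hf, hU1, abs_one, Real.one_rpow, mul_one]
    calc ((3*a)^2)⁻¹ = (3*a) ^ (-2:ℝ) := (rpow_neg_two_eq (by positivity)).symm
      _ ≤ ‖x‖ ^ (-2:ℝ) := Real.rpow_le_rpow_of_nonpos hx0 h2 (by norm_num)
  -- putting it together
  rw [MeasureTheory.restrict_compl_singleton]
  have hvolB : (volume B).toReal = a^2 * V := by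
    rw [hB, Measure.addHaar_ball volume y₀ ha0.le, finrank_euclideanSpace_fin,
      ENNReal.toReal_mul, ENNReal.toReal_ofReal (by positivity)]
  have step1 : ∫ x in B, ((3*a)^2)⁻¹ ≤ ∫ x in B, f x :=
    setIntegral_mono_on (integrableOn_const measure_ball_lt_top.ne)
      hfint.integrableOn measurableSet_ball hcb
  have step2 : ∫ x in B, f x ≤ ∫ x, f x :=
    setIntegral_le_integral hfint (ae_of_all _ hfnn)
  have step0 : ∫ x in B, (((3*a)^2)⁻¹ : ℝ) = V / 9 := by
    rw [setIntegral_const, smul_eq_mul, measureReal_def, hvolB]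
    field_simp
    ring
  linarith [step1, step2, step0.symm.le]
lemma key {β c : ℝ} (hβ : 0 ≤ β) (hc : 0 < c) :
    ∃ u : E → ℝ, ContDiff ℝ (⊤ : ℕ∞) u ∧ HasCompactSupport u ∧
      tsupport u ⊆ ({(0 : E)}ᶜ : Set E) ∧ u ≠ 0 ∧
      (∫ x in ({(0 : E)}ᶜ : Set E), ‖fderiv ℝ u x‖ ^ 2) <
        c * (∫ x in ({(0 : E)}ᶜ : Set E), ‖x‖ ^ (-2 : ℝ) * |u x| ^ (2 + β)) ^ (2 / (2 + β)) := by
  -- a bound on the derivative of the bump function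
  obtain ⟨K₀, hK₀⟩ := (g.hasCompactSupport.deriv).exists_bound_of_continuous
    (g.contDiff.continuous_deriv (by exact_mod_cast le_top))
  set K := max K₀ 1 with hKdef
  have hK : ∀ t, |deriv (g : ℝ → ℝ) t| ≤ K := by
    intro t
    calc |deriv (g : ℝ → ℝ) t| = ‖deriv (g : ℝ → ℝ) t‖ := (Real.norm_eq_abs _).symm
      _ ≤ K₀ := hK₀ t
      _ ≤ K := le_max_left _ _
  have hK1 : 1 ≤ K := le_max_right _ _
  set V := (volume (ball (0:E) 1)).toReal with hV
  have hV0 : 0 < V := by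
    rw [hV]
    exact ENNReal.toReal_pos (measure_ball_pos volume _ one_pos).ne' measure_ball_lt_top.ne
  set m' := (V/9) ^ ((2:ℝ)/(2+β)) with hm'def
  have hm'0 : 0 < m' := Real.rpow_pos_of_pos (by positivity) _
  have hcm' : 0 < c * m' := by positivity
  set L := max 2 (8*V*K^2/(c*m') + 1) with hLdef
  have hL : 2 ≤ L := le_max_left _ _
  have hL0 : (0:ℝ) < L := by linarith
  refine ⟨U L, U_contDiff hL, U_hasCompactSupport hL, U_tsupport_subset hL, U_ne_zero hL, ?_⟩
  have h1 := gradient_integral_le hL hK hK1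
  have h2 := rhs_integral_ge hL hβ
  have h3 : 8*V*K^2/L < c * m' := by
    rw [div_lt_iff₀ hL0]
    have hT : 8*V*K^2/(c*m') + 1 ≤ L := le_max_right _ _
    have h5 : 8*V*K^2 ≤ (L-1) * (c*m') := (div_le_iff₀ hcm').1 (by linarith)
    nlinarith
  have h4 : c * m' ≤
      c * (∫ x in ({(0 : E)}ᶜ : Set E), ‖x‖ ^ (-2 : ℝ) * |U L x| ^ (2 + β)) ^ (2 / (2 + β)) := by
    apply mul_le_mul_of_nonneg_left _ hc.le
    rw [hm'def]
    exact Real.rpow_le_rpow (by positivity) h2 (by positivity)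
  linarith

end MuAux

open Metric Set

/-- **The punctured plane (`n = 1`):** `μ_{2,β}(ℝ²\{0}) = 0`; equivalently, for every
`c > 0` there is a nonzero `u ∈ C_c^∞(ℝ²\{0})` with
`∫ |∇u|² < c (∫ |x|^{-2} |u|^{2+β})^{2/(2+β)}`. -/
theorem mu_punctured_plane_eq_zero (β : ℝ) (hβ : 0 ≤ β) :
    mu 1 β ({(0 : EuclideanSpace ℝ (Fin 2))}ᶜ) = 0 ∧
    ∀ c : ℝ, 0 < c → ∃ u : EuclideanSpace ℝ (Fin 2) → ℝ,
      ContDiff ℝ (⊤ : ℕ∞) u ∧ HasCompactSupport u ∧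
      tsupport u ⊆ {(0 : EuclideanSpace ℝ (Fin 2))}ᶜ ∧ u ≠ 0 ∧
      (∫ x in ({(0 : EuclideanSpace ℝ (Fin 2))}ᶜ : Set (EuclideanSpace ℝ (Fin 2))),
          ‖fderiv ℝ u x‖ ^ 2) <
        c * (∫ x in ({(0 : EuclideanSpace ℝ (Fin 2))}ᶜ : Set (EuclideanSpace ℝ (Fin 2))),
            ‖x‖ ^ (-2 : ℝ) * |u x| ^ (2 + β)) ^ (2 / (2 + β)) := by
  have hfr : frontier ({(0 : MuAux.E)}ᶜ : Set MuAux.E) = {(0 : MuAux.E)} := by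
    rw [frontier_compl, frontier, closure_singleton, interior_singleton, diff_empty]
  have hq : ∀ u : MuAux.E → ℝ, hsQuotient 1 β ({(0 : MuAux.E)}ᶜ) u =
      (∫ x in ({(0 : MuAux.E)}ᶜ : Set MuAux.E), ‖fderiv ℝ u x‖ ^ 2) /
        (∫ x in ({(0 : MuAux.E)}ᶜ : Set MuAux.E),
          ‖x‖ ^ (-2 : ℝ) * |u x| ^ (2 + β)) ^ ((2:ℝ) / (2 + β)) := by
    intro u
    unfold hsQuotient
    rw [hfr]
    have e1 : (-2 + (((1:ℕ):ℝ) - 1) / (((1:ℕ):ℝ) + 1) * β) = (-2 : ℝ) := by norm_num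
    have e2 : ((2:ℝ) + 2 * β / (((1:ℕ):ℝ) + 1)) = 2 + β := by push_cast; ring
    have e3 : ((((1:ℕ):ℝ)) + 1) / ((((1:ℕ):ℝ)) + β + 1) = (2:ℝ)/(2+β) := by
      push_cast
      rw [show ((1:ℝ) + β + 1) = 2 + β by ring]
      norm_num
    rw [e1, e2, e3]
    congr 1
    congr 1
    apply setIntegral_congr_fun (measurableSet_singleton _).compl
    intro x _
    simp only []
    rw [Metric.infDist_singleton, dist_zero_right]
  constructor
  · -- the infimum is zero
    set S := {r : ℝ | ∃ u : MuAux.E → ℝ,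
      ContDiff ℝ (⊤ : ℕ∞) u ∧ HasCompactSupport u ∧
      tsupport u ⊆ ({(0 : MuAux.E)}ᶜ : Set MuAux.E) ∧ u ≠ 0 ∧
      r = hsQuotient 1 β ({(0 : MuAux.E)}ᶜ) u} with hS
    have hlb : ∀ r ∈ S, (0:ℝ) ≤ r := by
      rintro r ⟨u, -, -, -, -, rfl⟩
      rw [hq u]
      apply div_nonneg
      · exact integral_nonneg fun x => by positivity
      · apply Real.rpow_nonneg
        exact integral_nonneg fun x => mul_nonneg (Real.rpow_nonneg (norm_nonneg _) _)
          (Real.rpow_nonneg (abs_nonneg _) _)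
    have hsmall : ∀ ε : ℝ, 0 < ε → ∃ r ∈ S, r < ε := by
      intro ε hε
      obtain ⟨u, hu1, hu2, hu3, hu4, hu5⟩ := MuAux.key hβ hε
      refine ⟨hsQuotient 1 β ({(0 : MuAux.E)}ᶜ) u, ⟨u, hu1, hu2, hu3, hu4, rfl⟩, ?_⟩
      rw [hq u]
      set N := ∫ x in ({(0 : MuAux.E)}ᶜ : Set MuAux.E), ‖fderiv ℝ u x‖ ^ 2 with hN
      set D := ∫ x in ({(0 : MuAux.E)}ᶜ : Set MuAux.E),
        ‖x‖ ^ (-2 : ℝ) * |u x| ^ (2 + β) with hD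
      have hN0 : 0 ≤ N := integral_nonneg fun x => by positivity
      have hD0 : 0 ≤ D ^ ((2:ℝ)/(2+β)) := by
        apply Real.rpow_nonneg
        exact integral_nonneg fun x => mul_nonneg (Real.rpow_nonneg (norm_nonneg _) _)
          (Real.rpow_nonneg (abs_nonneg _) _)
      have hDpos : 0 < D ^ ((2:ℝ)/(2+β)) := by
        rcases lt_or_eq_of_le hD0 with h | h
        · exact h
        · exfalso; rw [← h] at hu5; nlinarith
      rw [div_lt_iff₀ hDpos]
      exact hu5
    apply le_antisymm
    · by_contra h
      push_neg at h
      obtain ⟨r, hrS, hrlt⟩ := hsmall (sInf S) h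
      exact absurd (csInf_le ⟨0, fun x hx => hlb x hx⟩ hrS) (not_le.2 hrlt)
    · apply le_csInf
      · obtain ⟨u, hu1, hu2, hu3, hu4, -⟩ := MuAux.key hβ one_pos
        exact ⟨_, u, hu1, hu2, hu3, hu4, rfl⟩
      · exact fun r hr => hlb r hr
  · intro c hc
    exact MuAux.key hβ hc

end
end

section
/- Let n ≥ 2 and let β ≥ 0 satisfy β ≤ 2(n+1)/(n-1). Let Ω ⊂ ℝ^{n+1} be a bounded domain with Lipschitz boundary such that 0 ∈ Ω, and set Ω* = Ω\{0}. Then μ_{n+1,β}(Ω*) ≥ (μ_{n+1,β}(Ω) · μ_{n+1,β}(ℝ^{n+1}\{0})) / (μ_{n+1,β}(Ω) + μ_{n+1,β}(ℝ^{n+1}\{0})). -/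
open MeasureTheory

noncomputable section

/-- `Ω ⊆ ℝ^{n+1}` has Lipschitz boundary: near every boundary point, after a rigid
rotation, `Ω` coincides with the region above the graph of a Lipschitz function. -/
def HasLipschitzBoundary (n : ℕ) (Ω : Set (EuclideanSpace ℝ (Fin (n+1)))) : Prop :=
  ∀ z ∈ frontier Ω,
    ∃ (e : EuclideanSpace ℝ (Fin (n+1)) ≃ₗᵢ[ℝ] EuclideanSpace ℝ (Fin (n+1)))
      (φ : EuclideanSpace ℝ (Fin n) → ℝ) (K : NNReal) (r : ℝ),
      0 < r ∧ LipschitzWith K φ ∧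
      ∀ x ∈ Metric.ball z r,
        (x ∈ Ω ↔ φ ((EuclideanSpace.equiv (Fin n) ℝ).symm
            (fun i => e x (Fin.castSucc i))) < e x (Fin.last n))

/-! ### Auxiliary lemmas -/

section Aux

open Metric Set

lemma real_rpow_add_le {x y p : ℝ} (hx : 0 ≤ x) (hy : 0 ≤ y) (hp0 : 0 ≤ p) (hp1 : p ≤ 1) :
    (x + y) ^ p ≤ x ^ p + y ^ p := by
  have h := NNReal.rpow_add_le_add_rpow x.toNNReal y.toNNReal hp0 hp1
  have h2 := NNReal.coe_le_coe.2 h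
  push_cast at h2
  rwa [Real.coe_toNNReal x hx, Real.coe_toNNReal y hy] at h2

lemma weight_cont {m : ℕ} (S : Set (EuclideanSpace ℝ (Fin m)))
    {u : EuclideanSpace ℝ (Fin m) → ℝ} (hu : ContDiff ℝ (⊤ : ℕ∞) u)
    {e q : ℝ} (hq : 0 < q)
    (hS : ∀ x ∈ tsupport u, 0 < Metric.infDist x S) :
    Continuous (fun x => (Metric.infDist x S) ^ e * |u x| ^ q) := by
  rw [continuous_iff_continuousAt]
  intro x0
  by_cases hx : x0 ∈ tsupport u
  · have h1 : ContinuousAt (fun x => (Metric.infDist x S) ^ e) x0 :=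
      ContinuousAt.rpow_const ((continuous_infDist_pt S).continuousAt)
        (Or.inl (hS x0 hx).ne')
    have h2 : ContinuousAt (fun x => |u x| ^ q) x0 :=
      ContinuousAt.rpow_const (hu.continuous.abs.continuousAt) (Or.inr hq.le)
    exact h1.mul h2
  · have hev : (fun x => (Metric.infDist x S) ^ e * |u x| ^ q) =ᶠ[nhds x0] (fun _ => 0) := by
      filter_upwards [(isClosed_tsupport u).isOpen_compl.mem_nhds hx] with x hxc
      have hux : u x = 0 := image_eq_zero_of_notMem_tsupport hxc
      simp [hux, Real.zero_rpow hq.ne']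
    exact (continuousAt_const (y := (0:ℝ))).congr hev.symm

lemma weight_support {m : ℕ} (S : Set (EuclideanSpace ℝ (Fin m)))
    (u : EuclideanSpace ℝ (Fin m) → ℝ) {e q : ℝ} (hq : 0 < q) :
    Function.support (fun x => (Metric.infDist x S) ^ e * |u x| ^ q) ⊆ Function.support u := by
  intro x hx
  simp only [Function.mem_support] at hx ⊢
  intro hux
  apply hx
  simp [hux, Real.zero_rpow hq.ne']

lemma weight_integrable {m : ℕ} (S : Set (EuclideanSpace ℝ (Fin m)))
    {u : EuclideanSpace ℝ (Fin m) → ℝ} (hu : ContDiff ℝ (⊤ : ℕ∞) u)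
    (hcs : HasCompactSupport u) {e q : ℝ} (hq : 0 < q)
    (hS : ∀ x ∈ tsupport u, 0 < Metric.infDist x S) :
    Integrable (fun x => (Metric.infDist x S) ^ e * |u x| ^ q) := by
  apply (weight_cont S hu hq hS).integrable_of_hasCompactSupport
  exact hcs.mono' ((weight_support S u hq).trans (subset_tsupport u))

lemma frontier_punctured_subset {m : ℕ} {Ω : Set (EuclideanSpace ℝ (Fin (m+1)))}
    (hΩ : IsOpen Ω) :
    frontier (Ω \ {0}) ⊆ frontier Ω ∪ {0} := by
  intro y hy
  have hopen : IsOpen (Ω \ {0}) := hΩ.sdiff isClosed_singleton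
  rw [hopen.frontier_eq] at hy
  obtain ⟨hy1, hy2⟩ := hy
  have hycl : y ∈ closure Ω := closure_mono diff_subset hy1
  by_cases hyΩ : y ∈ Ω
  · right
    simp only [mem_singleton_iff]
    by_contra hne
    exact hy2 ⟨hyΩ, hne⟩
  · left
    rw [hΩ.frontier_eq]
    exact ⟨hycl, hyΩ⟩

lemma zero_mem_frontier_punctured {m : ℕ} {Ω : Set (EuclideanSpace ℝ (Fin (m+1)))}
    (hΩ : IsOpen Ω) (h0 : (0 : EuclideanSpace ℝ (Fin (m+1))) ∈ Ω) :
    (0 : EuclideanSpace ℝ (Fin (m+1))) ∈ frontier (Ω \ {0}) := by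
  have hopen : IsOpen (Ω \ {0}) := hΩ.sdiff isClosed_singleton
  rw [hopen.frontier_eq]
  constructor
  · rw [_root_.mem_closure_iff]
    intro U hU hU0
    obtain ⟨r, hr, hball⟩ := Metric.isOpen_iff.1 (hU.inter hΩ) 0 ⟨hU0, h0⟩
    obtain ⟨v, hv⟩ := exists_ne (0 : EuclideanSpace ℝ (Fin (m+1)))
    have hvn : (0:ℝ) < ‖v‖ := norm_pos_iff.2 hv
    set x := (r / (2 * ‖v‖)) • v with hxdef
    have hxne : x ≠ 0 := by
      apply smul_ne_zero _ hv
      positivity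
    have hxnorm : ‖x‖ = r / 2 := by
      rw [hxdef, norm_smul, Real.norm_eq_abs, abs_of_pos (by positivity)]
      field_simp
    have hxball : x ∈ Metric.ball (0 : EuclideanSpace ℝ (Fin (m+1))) r := by
      rw [Metric.mem_ball, dist_zero_right, hxnorm]
      linarith
    obtain ⟨hxU, hxΩ⟩ := hball hxball
    exact ⟨x, hxU, hxΩ, hxne⟩
  · simp

lemma frontier_compl_singleton {m : ℕ} :
    frontier ({(0 : EuclideanSpace ℝ (Fin (m+1)))}ᶜ) = {0} := by
  rw [frontier_compl]
  rw [frontier, isClosed_singleton.closure_eq]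
  have : interior ({(0 : EuclideanSpace ℝ (Fin (m+1)))} : Set _) = ∅ := by
    rw [← compl_compl ({(0 : EuclideanSpace ℝ (Fin (m+1)))} : Set _), interior_compl,
      (dense_compl_singleton (0 : EuclideanSpace ℝ (Fin (m+1)))).closure_eq]
    simp
  rw [this, diff_empty]

lemma hsQuotient_nonneg (n : ℕ) (β : ℝ) (Ω : Set (EuclideanSpace ℝ (Fin (n+1))))
    (u : EuclideanSpace ℝ (Fin (n+1)) → ℝ) : 0 ≤ hsQuotient n β Ω u := by
  apply div_nonneg
  · apply setIntegral_nonneg_of_ae_restrict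
    filter_upwards with x
    positivity
  · apply Real.rpow_nonneg
    apply setIntegral_nonneg_of_ae_restrict
    filter_upwards with x
    exact mul_nonneg (Real.rpow_nonneg Metric.infDist_nonneg _)
      (Real.rpow_nonneg (abs_nonneg _) _)

lemma mu_nonneg (n : ℕ) (β : ℝ) (S : Set (EuclideanSpace ℝ (Fin (n+1)))) :
    0 ≤ mu n β S := by
  apply Real.sInf_nonneg
  rintro r ⟨u, -, -, -, -, rfl⟩
  exact hsQuotient_nonneg n β S u

lemma mu_bddBelow (n : ℕ) (β : ℝ) (S : Set (EuclideanSpace ℝ (Fin (n+1)))) :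
    BddBelow {r : ℝ | ∃ u : EuclideanSpace ℝ (Fin (n+1)) → ℝ,
      ContDiff ℝ (⊤ : ℕ∞) u ∧ HasCompactSupport u ∧ tsupport u ⊆ S ∧ u ≠ 0 ∧
      r = hsQuotient n β S u} := by
  refine ⟨0, ?_⟩
  rintro r ⟨u, -, -, -, -, rfl⟩
  exact hsQuotient_nonneg n β S u

lemma setIntegral_grad_eq {m : ℕ} {u : EuclideanSpace ℝ (Fin m) → ℝ}
    {A : Set (EuclideanSpace ℝ (Fin m))} (hA : tsupport u ⊆ A) :
    ∫ x in A, ‖fderiv ℝ u x‖ ^ 2 = ∫ x, ‖fderiv ℝ u x‖ ^ 2 := by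
  apply setIntegral_eq_integral_of_forall_compl_eq_zero
  intro x hx
  have : fderiv ℝ u x = 0 := by
    by_contra h
    exact hx (hA (support_fderiv_subset ℝ (Function.mem_support.2 h)))
  simp [this]

lemma setIntegral_weight_eq {m : ℕ} {u : EuclideanSpace ℝ (Fin m) → ℝ}
    (S : Set (EuclideanSpace ℝ (Fin m)))
    {A : Set (EuclideanSpace ℝ (Fin m))} (hA : tsupport u ⊆ A) {e q : ℝ} (hq : 0 < q) :
    ∫ x in A, (Metric.infDist x S) ^ e * |u x| ^ q
      = ∫ x, (Metric.infDist x S) ^ e * |u x| ^ q := by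
  apply setIntegral_eq_integral_of_forall_compl_eq_zero
  intro x hx
  have hux : u x = 0 := by
    by_contra h
    exact hx (hA (subset_tsupport u (Function.mem_support.2 h)))
  simp [hux, Real.zero_rpow hq.ne']

lemma hsQuotient_eq_div (n : ℕ) (β : ℝ) (hβ : 0 ≤ β)
    {A : Set (EuclideanSpace ℝ (Fin (n+1)))}
    {u : EuclideanSpace ℝ (Fin (n+1)) → ℝ} (hA : tsupport u ⊆ A) :
    hsQuotient n β A u =
      (∫ x, ‖fderiv ℝ u x‖ ^ 2) /
        (∫ x, (Metric.infDist x (frontier A)) ^ (-2 + ((n : ℝ) - 1) / ((n : ℝ) + 1) * β) *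
            |u x| ^ (2 + 2 * β / ((n : ℝ) + 1))) ^ (((n : ℝ) + 1) / ((n : ℝ) + β + 1)) := by
  have hq : (0:ℝ) < 2 + 2 * β / ((n : ℝ) + 1) := by positivity
  rw [hsQuotient, setIntegral_grad_eq hA, setIntegral_weight_eq _ hA hq]

end Aux

/-- **Lower bound for the sharp constant of a punctured domain.**  For `n ≥ 2`,
`0 ≤ β ≤ 2(n+1)/(n-1)`, and a bounded domain `Ω` with Lipschitz boundary containing `0`,
`μ_{n+1,β}(Ω\{0}) ≥ μ_{n+1,β}(Ω)·μ_{n+1,β}(ℝ^{n+1}\{0}) /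
  (μ_{n+1,β}(Ω) + μ_{n+1,β}(ℝ^{n+1}\{0}))`. -/
theorem mu_punctured_domain_lower_bound
    (n : ℕ) (hn : 2 ≤ n) (β : ℝ) (hβ0 : 0 ≤ β)
    (hβ1 : β ≤ 2 * ((n : ℝ) + 1) / ((n : ℝ) - 1))
    (Ω : Set (EuclideanSpace ℝ (Fin (n+1))))
    (hΩ_open : IsOpen Ω) (hΩ_conn : IsConnected Ω)
    (hΩ_bdd : Bornology.IsBounded Ω)
    (hΩ_lip : HasLipschitzBoundary n Ω)
    (h0 : (0 : EuclideanSpace ℝ (Fin (n+1))) ∈ Ω) :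
    mu n β (Ω \ {0}) ≥
      mu n β Ω * mu n β ({(0 : EuclideanSpace ℝ (Fin (n+1)))}ᶜ) /
        (mu n β Ω + mu n β ({(0 : EuclideanSpace ℝ (Fin (n+1)))}ᶜ)) := by
  classical
  rw [ge_iff_le]
  by_cases hab : mu n β Ω = 0 ∨ mu n β ({(0 : EuclideanSpace ℝ (Fin (n+1)))}ᶜ) = 0
  · have hz : mu n β Ω * mu n β ({(0 : EuclideanSpace ℝ (Fin (n+1)))}ᶜ) = 0 := by
      rcases hab with h | h <;> simp [h]
    rw [hz, zero_div]
    exact mu_nonneg n β _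
  · push_neg at hab
    have ha : 0 < mu n β Ω := (mu_nonneg n β Ω).lt_of_ne' hab.1
    have hb : 0 < mu n β ({(0 : EuclideanSpace ℝ (Fin (n+1)))}ᶜ) :=
      (mu_nonneg n β _).lt_of_ne' hab.2
    set a := mu n β Ω with ha_def
    set b := mu n β ({(0 : EuclideanSpace ℝ (Fin (n+1)))}ᶜ) with hb_def
    -- basic numeric facts
    have hnR : (2:ℝ) ≤ (n:ℝ) := by exact_mod_cast hn
    have hq : (0:ℝ) < 2 + 2 * β / ((n : ℝ) + 1) := by positivity
    have he : -2 + ((n : ℝ) - 1) / ((n : ℝ) + 1) * β ≤ 0 := by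
      have h1 : ((n : ℝ) - 1) / ((n : ℝ) + 1) * β
          ≤ ((n : ℝ) - 1) / ((n : ℝ) + 1) * (2 * ((n : ℝ) + 1) / ((n : ℝ) - 1)) :=
        mul_le_mul_of_nonneg_left hβ1 (div_nonneg (by linarith) (by positivity))
      have h2 : ((n : ℝ) - 1) / ((n : ℝ) + 1) * (2 * ((n : ℝ) + 1) / ((n : ℝ) - 1)) = 2 := by
        rw [div_mul_div_comm, div_eq_iff (mul_ne_zero (by linarith : ((n:ℝ)+1) ≠ 0)
          (by linarith : ((n:ℝ)-1) ≠ 0))]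
        ring
      linarith
    have hp0 : (0:ℝ) < ((n : ℝ) + 1) / ((n : ℝ) + β + 1) := by positivity
    have hp1 : ((n : ℝ) + 1) / ((n : ℝ) + β + 1) ≤ 1 := by
      rw [div_le_one (by positivity)]
      linarith
    -- the punctured domain
    have hopen : IsOpen (Ω \ {0}) := hΩ_open.sdiff isClosed_singleton
    have h0fr : (0 : EuclideanSpace ℝ (Fin (n+1))) ∈ frontier (Ω \ {0}) :=
      zero_mem_frontier_punctured hΩ_open h0
    have hfrpne : (frontier (Ω \ {0})).Nonempty := ⟨0, h0fr⟩
    have hfrΩne : (frontier Ω).Nonempty := by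
      rw [nonempty_frontier_iff]
      refine ⟨⟨0, h0⟩, fun h => ?_⟩
      exact NormedSpace.unbounded_univ ℝ (EuclideanSpace ℝ (Fin (n+1))) (h ▸ hΩ_bdd)
    -- nonemptiness of the admissible set for the punctured domain
    have hΩpne : (Ω \ {0}).Nonempty := by
      rcases Set.eq_empty_or_nonempty (Ω \ {0}) with h | h
      · exfalso
        have := h0fr.1
        rw [h] at this
        simp at this
      · exact h
    obtain ⟨x0, hx0⟩ := hΩpne
    obtain ⟨ε, hε, hball⟩ := Metric.isOpen_iff.1 hopen x0 hx0
    let f : ContDiffBump x0 := ⟨ε/4, ε/2, by positivity, by linarith⟩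
    have hfsupp : tsupport (⇑f) ⊆ Ω \ {0} := by
      rw [f.tsupport_eq]
      exact (Metric.closedBall_subset_ball (by simp only [f]; linarith)).trans hball
    have hfne : (⇑f : EuclideanSpace ℝ (Fin (n+1)) → ℝ) ≠ 0 := by
      intro h
      have hpos : 0 < f x0 := f.pos_of_mem_ball (Metric.mem_ball_self f.rOut_pos)
      rw [h] at hpos
      simp at hpos
    have hne : {r : ℝ | ∃ u : EuclideanSpace ℝ (Fin (n+1)) → ℝ,
        ContDiff ℝ (⊤ : ℕ∞) u ∧ HasCompactSupport u ∧ tsupport u ⊆ Ω \ {0} ∧ u ≠ 0 ∧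
        r = hsQuotient n β (Ω \ {0}) u}.Nonempty :=
      ⟨hsQuotient n β (Ω \ {0}) ⇑f, ⟨⇑f, f.contDiff, f.hasCompactSupport, hfsupp, hfne, rfl⟩⟩
    rw [mu]
    apply le_csInf hne
    rintro r ⟨u, hu, hcs, hsupp, hune, rfl⟩
    -- positivity of infDist on the support
    have hsub0 : ∀ x ∈ tsupport u, 0 < Metric.infDist x ({0} : Set (EuclideanSpace ℝ (Fin (n+1)))) := by
      intro x hx
      rw [Metric.infDist_singleton]
      exact dist_pos.2 (hsupp hx).2
    have hsubΩ : ∀ x ∈ tsupport u, 0 < Metric.infDist x (frontier Ω) := by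
      intro x hx
      refine (isClosed_frontier.notMem_iff_infDist_pos hfrΩne).1 ?_
      rw [hΩ_open.frontier_eq]
      exact fun h => h.2 (hsupp hx).1
    have hsubp : ∀ x ∈ tsupport u, 0 < Metric.infDist x (frontier (Ω \ {0})) := by
      intro x hx
      refine (isClosed_frontier.notMem_iff_infDist_pos hfrpne).1 ?_
      rw [hopen.frontier_eq]
      exact fun h => h.2 (hsupp hx)
    -- pointwise inequality between the weights
    have hptw : ∀ x, (Metric.infDist x (frontier (Ω \ {0}))) ^ (-2 + ((n : ℝ) - 1) / ((n : ℝ) + 1) * β) *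
          |u x| ^ (2 + 2 * β / ((n : ℝ) + 1))
        ≤ (Metric.infDist x ({0} : Set (EuclideanSpace ℝ (Fin (n+1))))) ^ (-2 + ((n : ℝ) - 1) / ((n : ℝ) + 1) * β) *
            |u x| ^ (2 + 2 * β / ((n : ℝ) + 1))
          + (Metric.infDist x (frontier Ω)) ^ (-2 + ((n : ℝ) - 1) / ((n : ℝ) + 1) * β) *
            |u x| ^ (2 + 2 * β / ((n : ℝ) + 1)) := by
      intro x
      by_cases hux : u x = 0
      · simp [hux, Real.zero_rpow hq.ne']
      · have hx : x ∈ tsupport u := subset_tsupport u (Function.mem_support.2 hux)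
        have hd0 := hsub0 x hx
        have hdΩ := hsubΩ x hx
        have hdp := hsubp x hx
        have hmin : min (Metric.infDist x ({0} : Set (EuclideanSpace ℝ (Fin (n+1)))))
            (Metric.infDist x (frontier Ω)) ≤ Metric.infDist x (frontier (Ω \ {0})) := by
          by_contra hlt
          push_neg at hlt
          obtain ⟨y, hy, hdy⟩ := (Metric.infDist_lt_iff hfrpne).1 hlt
          rcases frontier_punctured_subset hΩ_open hy with h | h
          · exact absurd hdy (not_lt.2 ((min_le_right _ _).trans
              (Metric.infDist_le_dist_of_mem h)))
          · rw [Set.mem_singleton_iff] at h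
            subst h
            exact absurd hdy (not_lt.2 ((min_le_left _ _).trans
              (Metric.infDist_le_dist_of_mem rfl)))
        have hmpos : 0 < min (Metric.infDist x ({0} : Set (EuclideanSpace ℝ (Fin (n+1)))))
            (Metric.infDist x (frontier Ω)) := lt_min hd0 hdΩ
        have h1 : (Metric.infDist x (frontier (Ω \ {0}))) ^ (-2 + ((n : ℝ) - 1) / ((n : ℝ) + 1) * β)
            ≤ (min (Metric.infDist x ({0} : Set (EuclideanSpace ℝ (Fin (n+1)))))
                (Metric.infDist x (frontier Ω))) ^ (-2 + ((n : ℝ) - 1) / ((n : ℝ) + 1) * β) :=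
          Real.rpow_le_rpow_of_nonpos hmpos hmin he
        have h2 : (min (Metric.infDist x ({0} : Set (EuclideanSpace ℝ (Fin (n+1)))))
              (Metric.infDist x (frontier Ω))) ^ (-2 + ((n : ℝ) - 1) / ((n : ℝ) + 1) * β)
            ≤ (Metric.infDist x ({0} : Set (EuclideanSpace ℝ (Fin (n+1))))) ^ (-2 + ((n : ℝ) - 1) / ((n : ℝ) + 1) * β)
              + (Metric.infDist x (frontier Ω)) ^ (-2 + ((n : ℝ) - 1) / ((n : ℝ) + 1) * β) := by
          rcases min_cases (Metric.infDist x ({0} : Set (EuclideanSpace ℝ (Fin (n+1)))))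
              (Metric.infDist x (frontier Ω)) with ⟨hmeq, -⟩ | ⟨hmeq, -⟩ <;> rw [hmeq]
          · exact le_add_of_nonneg_right (Real.rpow_nonneg Metric.infDist_nonneg _)
          · exact le_add_of_nonneg_left (Real.rpow_nonneg Metric.infDist_nonneg _)
        calc (Metric.infDist x (frontier (Ω \ {0}))) ^ (-2 + ((n : ℝ) - 1) / ((n : ℝ) + 1) * β) *
              |u x| ^ (2 + 2 * β / ((n : ℝ) + 1))
            ≤ ((Metric.infDist x ({0} : Set (EuclideanSpace ℝ (Fin (n+1))))) ^ (-2 + ((n : ℝ) - 1) / ((n : ℝ) + 1) * β)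
                + (Metric.infDist x (frontier Ω)) ^ (-2 + ((n : ℝ) - 1) / ((n : ℝ) + 1) * β)) *
              |u x| ^ (2 + 2 * β / ((n : ℝ) + 1)) :=
              mul_le_mul_of_nonneg_right (h1.trans h2) (Real.rpow_nonneg (abs_nonneg _) _)
          _ = _ := add_mul _ _ _
    -- integrability
    have hg0 := weight_integrable ({0} : Set (EuclideanSpace ℝ (Fin (n+1)))) hu hcs hq hsub0
      (e := -2 + ((n : ℝ) - 1) / ((n : ℝ) + 1) * β)
    have hgΩ := weight_integrable (frontier Ω) hu hcs hq hsubΩ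
      (e := -2 + ((n : ℝ) - 1) / ((n : ℝ) + 1) * β)
    have hgp := weight_integrable (frontier (Ω \ {0})) hu hcs hq hsubp
      (e := -2 + ((n : ℝ) - 1) / ((n : ℝ) + 1) * β)
    -- notation for the integrals
    set E := ∫ x, ‖fderiv ℝ u x‖ ^ 2 with hE_def
    set D0 := ∫ x, (Metric.infDist x ({0} : Set (EuclideanSpace ℝ (Fin (n+1))))) ^ (-2 + ((n : ℝ) - 1) / ((n : ℝ) + 1) * β) *
        |u x| ^ (2 + 2 * β / ((n : ℝ) + 1)) with hD0_def
    set DΩ := ∫ x, (Metric.infDist x (frontier Ω)) ^ (-2 + ((n : ℝ) - 1) / ((n : ℝ) + 1) * β) *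
        |u x| ^ (2 + 2 * β / ((n : ℝ) + 1)) with hDΩ_def
    set Dp := ∫ x, (Metric.infDist x (frontier (Ω \ {0}))) ^ (-2 + ((n : ℝ) - 1) / ((n : ℝ) + 1) * β) *
        |u x| ^ (2 + 2 * β / ((n : ℝ) + 1)) with hDp_def
    have hEnn : 0 ≤ E := integral_nonneg fun x => by positivity
    have hD0nn : 0 ≤ D0 := integral_nonneg fun x =>
      mul_nonneg (Real.rpow_nonneg Metric.infDist_nonneg _) (Real.rpow_nonneg (abs_nonneg _) _)
    have hDΩnn : 0 ≤ DΩ := integral_nonneg fun x =>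
      mul_nonneg (Real.rpow_nonneg Metric.infDist_nonneg _) (Real.rpow_nonneg (abs_nonneg _) _)
    have hDpnn : 0 ≤ Dp := integral_nonneg fun x =>
      mul_nonneg (Real.rpow_nonneg Metric.infDist_nonneg _) (Real.rpow_nonneg (abs_nonneg _) _)
    have hDle : Dp ≤ D0 + DΩ := by
      rw [hDp_def, hD0_def, hDΩ_def, ← integral_add hg0 hgΩ]
      exact integral_mono hgp (hg0.add hgΩ) hptw
    -- positivity of Dp
    have hDppos : 0 < Dp := by
      rw [hDp_def]
      rw [integral_pos_iff_support_of_nonneg (fun x =>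
        mul_nonneg (Real.rpow_nonneg Metric.infDist_nonneg _)
          (Real.rpow_nonneg (abs_nonneg _) _)) hgp]
      obtain ⟨x1, hx1⟩ := Function.ne_iff.1 hune
      have hx1' : x1 ∈ tsupport u := subset_tsupport u (Function.mem_support.2 hx1)
      have hgx1 : 0 < (Metric.infDist x1 (frontier (Ω \ {0}))) ^ (-2 + ((n : ℝ) - 1) / ((n : ℝ) + 1) * β) *
          |u x1| ^ (2 + 2 * β / ((n : ℝ) + 1)) :=
        mul_pos (Real.rpow_pos_of_pos (hsubp x1 hx1') _)
          (Real.rpow_pos_of_pos (abs_pos.2 hx1) _)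
      exact ((weight_cont _ hu hq hsubp).isOpen_support).measure_pos volume
        ⟨x1, Function.mem_support.2 hgx1.ne'⟩
    have hDppow : 0 < Dp ^ (((n : ℝ) + 1) / ((n : ℝ) + β + 1)) :=
      Real.rpow_pos_of_pos hDppos _
    -- bounds coming from the definitions of a and b
    have haQ : a ≤ E / DΩ ^ (((n : ℝ) + 1) / ((n : ℝ) + β + 1)) := by
      have hmem : hsQuotient n β Ω u ∈ {r : ℝ | ∃ u : EuclideanSpace ℝ (Fin (n+1)) → ℝ,
          ContDiff ℝ (⊤ : ℕ∞) u ∧ HasCompactSupport u ∧ tsupport u ⊆ Ω ∧ u ≠ 0 ∧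
          r = hsQuotient n β Ω u} :=
        ⟨u, hu, hcs, hsupp.trans Set.diff_subset, hune, rfl⟩
      have := csInf_le (mu_bddBelow n β Ω) hmem
      rwa [hsQuotient_eq_div n β hβ0 (hsupp.trans Set.diff_subset), ← hE_def, ← hDΩ_def] at this
    have hbQ : b ≤ E / D0 ^ (((n : ℝ) + 1) / ((n : ℝ) + β + 1)) := by
      have hsubc : tsupport u ⊆ ({(0 : EuclideanSpace ℝ (Fin (n+1)))}ᶜ : Set _) := fun x hx =>
        (hsupp hx).2
      have hmem : hsQuotient n β ({(0 : EuclideanSpace ℝ (Fin (n+1)))}ᶜ) u ∈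
          {r : ℝ | ∃ u : EuclideanSpace ℝ (Fin (n+1)) → ℝ,
          ContDiff ℝ (⊤ : ℕ∞) u ∧ HasCompactSupport u ∧
          tsupport u ⊆ ({(0 : EuclideanSpace ℝ (Fin (n+1)))}ᶜ : Set _) ∧ u ≠ 0 ∧
          r = hsQuotient n β ({(0 : EuclideanSpace ℝ (Fin (n+1)))}ᶜ) u} :=
        ⟨u, hu, hcs, hsubc, hune, rfl⟩
      have h := csInf_le (mu_bddBelow n β _) hmem
      rw [hsQuotient_eq_div n β hβ0 hsubc, frontier_compl_singleton] at h
      rwa [← hE_def, ← hD0_def] at h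
    have hDΩp : DΩ ^ (((n : ℝ) + 1) / ((n : ℝ) + β + 1)) ≤ E / a := by
      rw [le_div_iff₀ ha]
      rcases (Real.rpow_nonneg hDΩnn (((n : ℝ) + 1) / ((n : ℝ) + β + 1))).eq_or_lt with h | h
      · rw [← h, zero_mul]; exact hEnn
      · rw [le_div_iff₀ h] at haQ
        nlinarith
    have hD0p : D0 ^ (((n : ℝ) + 1) / ((n : ℝ) + β + 1)) ≤ E / b := by
      rw [le_div_iff₀ hb]
      rcases (Real.rpow_nonneg hD0nn (((n : ℝ) + 1) / ((n : ℝ) + β + 1))).eq_or_lt with h | h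
      · rw [← h, zero_mul]; exact hEnn
      · rw [le_div_iff₀ h] at hbQ
        nlinarith
    have hDstar : Dp ^ (((n : ℝ) + 1) / ((n : ℝ) + β + 1)) ≤ E / b + E / a := by
      calc Dp ^ (((n : ℝ) + 1) / ((n : ℝ) + β + 1))
          ≤ (D0 + DΩ) ^ (((n : ℝ) + 1) / ((n : ℝ) + β + 1)) :=
            Real.rpow_le_rpow hDpnn hDle hp0.le
        _ ≤ D0 ^ (((n : ℝ) + 1) / ((n : ℝ) + β + 1))
            + DΩ ^ (((n : ℝ) + 1) / ((n : ℝ) + β + 1)) :=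
            real_rpow_add_le hD0nn hDΩnn hp0.le hp1
        _ ≤ E / b + E / a := add_le_add hD0p hDΩp
    -- conclusion
    rw [hsQuotient_eq_div n β hβ0 hsupp, ← hE_def, ← hDp_def]
    rw [div_le_div_iff₀ (by positivity) hDppow]
    calc a * b * Dp ^ (((n : ℝ) + 1) / ((n : ℝ) + β + 1))
        ≤ a * b * (E / b + E / a) :=
          mul_le_mul_of_nonneg_left hDstar (by positivity)
      _ = E * (a + b) := by
          field_simp
end
end
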